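/- arXiv:2105.00298 — 6 statements merged into one kernel-verified Lean document; each statement's English description precedes it below -/
import Mathlib

section
/- Let p be a prime number and let s ∈ ℂ with Re(s) > -1. Then ∫_{ℤ_p} |x|_p^s dμ(x) = (1 - p^{-1})/(1 - p^{-1-s}). -/
/-!
Away from `0`, `ℤ_p` is the disjoint union of the spheres `|x|_p = p⁻ⁿ`, `n ≥ 0`, on each of which
the integrand is the constant `p^(-ns)`. The ball `|x|_p ≤ p⁻ⁿ` is `pⁿℤ_p`, the kernel of
`ℤ_p → ℤ/pⁿ`, a subgroup of index `pⁿ`; translation invariance gives it measure `p⁻ⁿ`, so the sphere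
has measure `p⁻ⁿ(1 - p⁻¹)`. The integral is the geometric series `(1 - p⁻¹) ∑ (p^(-1-s))ⁿ`, which
converges absolutely because `Re s > -1`.
-/

open MeasureTheory Set Function
open scoped ENNReal

theorem AddSubgroup.index_mul_measure_image {G H : Type*} [AddGroup G] [AddGroup H]
    [MeasurableSpace G] [MeasurableSpace H] [MeasurableAdd G] [MeasurableAdd H]
    (A : AddSubgroup G) [A.FiniteIndex] (hA : MeasurableSet (A : Set G))
    (μ : Measure H) [μ.IsAddLeftInvariant] {f : G →+ H} (hf : MeasurableEmbedding f) :
    A.index * μ (f '' A) = μ (range f) := by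
  have := Measure.IsAddLeftInvariant.comap μ hf
  simpa [hf.comap_apply] using A.index_mul_measure hA (μ.comap f)

theorem MeasureTheory.hasSum_setIntegral_iUnion_of_eqOn_const {X E ι : Type*}
    [MeasurableSpace X] [NormedAddCommGroup E] [NormedSpace ℝ E] [CompleteSpace E] [Countable ι]
    {μ : Measure X} {f : X → E} {s : ι → Set X} {c : ι → E}
    (hs : ∀ i, MeasurableSet (s i)) (hd : Pairwise (Disjoint on s)) (hμ : ∀ i, μ (s i) ≠ ∞)
    (hf : ∀ i, EqOn f (fun _ ↦ c i) (s i)) (hsum : Summable fun i ↦ ‖μ.real (s i) • c i‖) :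
    HasSum (fun i ↦ μ.real (s i) • c i) (∫ x in ⋃ i, s i, f x ∂μ) := by
  have hint (i : ι) : ∫ x in s i, f x ∂μ = μ.real (s i) • c i := by
    rw [setIntegral_congr_fun (hs i) (hf i), setIntegral_const]
  have hnorm (i : ι) : ∫ x in s i, ‖f x‖ ∂μ = μ.real (s i) * ‖c i‖ := by
    rw [setIntegral_congr_fun (hs i) fun x hx ↦ congrArg norm (hf i hx), setIntegral_const,
      smul_eq_mul]
  have hon (i : ι) : IntegrableOn f (s i) μ :=
    (integrableOn_const (hμ i)).congr_fun (hf i).symm (hs i)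
  simpa only [hint] using hasSum_integral_iUnion hs hd
    (integrableOn_iUnion_of_summable_integral_norm hon
      (by simpa only [hnorm, norm_smul, Real.norm_of_nonneg measureReal_nonneg] using hsum))

theorem Complex.ofReal_zpow_neg_cpow {x : ℝ} (hx : 0 ≤ x) (n : ℕ) (s : ℂ) :
    ((x ^ (-n : ℤ) : ℝ) : ℂ) ^ s = ((x : ℂ) ^ (-s)) ^ n := by
  induction n with
  | zero => simp
  | succ n ih =>
    rw [zpow_neg, zpow_natCast, ← inv_pow] at *
    rw [pow_succ, ofReal_mul, mul_cpow_ofReal_nonneg (by positivity) (by positivity), ih,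
      ofReal_inv, inv_cpow_ofReal_nonneg hx, ← cpow_neg, pow_succ]

namespace PadicInt
variable {p : ℕ} [Fact p.Prime]

theorem index_span_pow (n : ℕ) :
    (Ideal.span {(p : ℤ_[p]) ^ n}).toAddSubgroup.index = p ^ n := by
  rw [← ker_toZModPow]
  have := AddSubgroup.index_ker (toZModPow n : ℤ_[p] →+* ZMod (p ^ n)).toAddMonoidHom
  rw [AddMonoidHom.range_eq_top.mpr (ZMod.ringHom_surjective _)] at this
  simp only [AddSubgroup.card_top, Nat.card_zmod] at this
  exact this

theorem isClosedEmbedding_coe : Topology.IsClosedEmbedding ((↑) : ℤ_[p] → ℚ_[p]) :=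
  .subtypeVal (isClosed_le continuous_norm continuous_const)

theorem image_coe_span_pow (n : ℕ) :
    ((↑) : ℤ_[p] → ℚ_[p]) '' (Ideal.span {(p : ℤ_[p]) ^ n} : Set ℤ_[p]) =
      {x | ‖x‖ ≤ (p : ℝ) ^ (-n : ℤ)} := by
  ext x
  refine ⟨?_, fun hx ↦ ?_⟩
  · rintro ⟨y, hy, rfl⟩
    exact (norm_le_pow_iff_mem_span_pow y n).2 hy
  · have hx₁ : ‖x‖ ≤ 1 :=
      hx.trans (zpow_le_one_of_nonpos₀ (mod_cast (Fact.out : p.Prime).one_le) (by simp))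
    exact ⟨⟨x, hx₁⟩, (norm_le_pow_iff_mem_span_pow _ n).1 hx, rfl⟩

end PadicInt

namespace Padic
variable {p : ℕ} [Fact p.Prime]

theorem setOf_norm_eq_zpow (n : ℕ) :
    {x : ℚ_[p] | ‖x‖ = (p : ℝ) ^ (-n : ℤ)} =
      {x | ‖x‖ ≤ (p : ℝ) ^ (-n : ℤ)} \ {x | ‖x‖ ≤ (p : ℝ) ^ (-(n + 1 : ℕ) : ℤ)} := by
  ext x
  rw [mem_sdiff, mem_ofPred_eq, mem_ofPred_eq, mem_ofPred_eq, show -((n + 1 : ℕ) : ℤ) = -n - 1 by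
    push_cast; ring, ← norm_lt_pow_iff_norm_le_pow_sub_one, not_lt, le_antisymm_iff]

theorem iUnion_setOf_norm_eq_zpow :
    ⋃ n : ℕ, {x : ℚ_[p] | ‖x‖ = (p : ℝ) ^ (-n : ℤ)} = {x | ‖x‖ ≤ 1} \ {0} := by
  have hp : (1 : ℝ) < p := mod_cast (Fact.out : p.Prime).one_lt
  ext x
  simp only [mem_iUnion, mem_ofPred_eq, mem_sdiff, mem_singleton_iff]
  constructor
  · rintro ⟨n, hn⟩
    refine ⟨hn ▸ zpow_le_one_of_nonpos₀ hp.le (by simp), ?_⟩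
    rintro rfl
    exact (zpow_pos (zero_lt_one.trans hp) _).ne' (hn.symm.trans norm_zero)
  · rintro ⟨hx, hx0⟩
    rw [norm_le_one_iff_val_nonneg] at hx
    exact ⟨x.valuation.toNat, by rw [norm_eq_zpow_neg_valuation hx0, Int.toNat_of_nonneg hx]⟩

theorem pairwise_disjoint_setOf_norm_eq_zpow :
    Pairwise (Disjoint on fun n : ℕ ↦ {x : ℚ_[p] | ‖x‖ = (p : ℝ) ^ (-n : ℤ)}) := by
  have hp : (1 : ℝ) < p := mod_cast (Fact.out : p.Prime).one_lt
  intro i j hij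
  refine disjoint_left.2 fun x hi hj ↦ hij ?_
  have := zpow_right_injective₀ (zero_lt_one.trans hp) hp.ne' (hi.symm.trans hj)
  omega

variable [MeasurableSpace ℚ_[p]] [BorelSpace ℚ_[p]] (μ : Measure ℚ_[p]) [μ.IsAddHaarMeasure]

theorem measure_norm_le_zpow (hμ : μ {x : ℚ_[p] | ‖x‖ ≤ 1} = 1) (n : ℕ) :
    μ {x : ℚ_[p] | ‖x‖ ≤ (p : ℝ) ^ (-n : ℤ)} = ((p : ℝ≥0∞) ^ n)⁻¹ := by
  let _ : MeasurableSpace ℤ_[p] := Subtype.instMeasurableSpace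
  have : BorelSpace ℤ_[p] := Subtype.borelSpace _
  let A := (Ideal.span {(p : ℤ_[p]) ^ n}).toAddSubgroup
  have : A.FiniteIndex := ⟨by rw [PadicInt.index_span_pow]; exact pow_ne_zero _ (NeZero.ne p)⟩
  have hA : MeasurableSet (A : Set ℤ_[p]) := by
    have : (A : Set ℤ_[p]) = {y | ‖y‖ ≤ (p : ℝ) ^ (-n : ℤ)} := by
      ext y; exact (PadicInt.norm_le_pow_iff_mem_span_pow y n).symm
    rw [this]
    exact (isClosed_le continuous_norm continuous_const).measurableSet
  have key := A.index_mul_measure_image hA μ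
    (f := (PadicInt.Coe.ringHom : ℤ_[p] →+* ℚ_[p]).toAddMonoidHom)
    PadicInt.isClosedEmbedding_coe.measurableEmbedding
  change _ * μ (((↑) : ℤ_[p] → ℚ_[p]) '' (Ideal.span {(p : ℤ_[p]) ^ n} : Set ℤ_[p])) =
    μ (range ((↑) : ℤ_[p] → ℚ_[p])) at key
  rw [PadicInt.index_span_pow, PadicInt.image_coe_span_pow, Subtype.range_coe_subtype, hμ] at key
  exact ENNReal.eq_inv_of_mul_eq_one_left (by rwa [mul_comm, ← Nat.cast_pow])

theorem measureReal_norm_eq_zpow (hμ : μ {x : ℚ_[p] | ‖x‖ ≤ 1} = 1) (n : ℕ) :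
    μ.real {x : ℚ_[p] | ‖x‖ = (p : ℝ) ^ (-n : ℤ)} = (p : ℝ)⁻¹ ^ n * (1 - (p : ℝ)⁻¹) := by
  have hp : (1 : ℝ) < p := mod_cast (Fact.out : p.Prime).one_lt
  have hsub : {x : ℚ_[p] | ‖x‖ ≤ (p : ℝ) ^ (-(n + 1 : ℕ) : ℤ)} ⊆ {x | ‖x‖ ≤ (p : ℝ) ^ (-n : ℤ)} :=
    fun x hx ↦ hx.trans (zpow_le_zpow_right₀ hp.le (by omega))
  rw [setOf_norm_eq_zpow, measureReal_sdiff hsub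
    (isClosed_le continuous_norm continuous_const).measurableSet
    (by rw [measure_norm_le_zpow μ hμ]; simp [(Fact.out : p.Prime).ne_zero]),
    measureReal_def, measureReal_def, measure_norm_le_zpow μ hμ, measure_norm_le_zpow μ hμ]
  simp only [ENNReal.toReal_inv, ENNReal.toReal_pow, ENNReal.toReal_natCast, inv_pow]
  ring

theorem measureReal_norm_eq_zpow_smul_cpow (hμ : μ {x : ℚ_[p] | ‖x‖ ≤ 1} = 1) (s : ℂ) (n : ℕ) :
    μ.real {x : ℚ_[p] | ‖x‖ = (p : ℝ) ^ (-n : ℤ)} • ((((p : ℝ) ^ (-n : ℤ) : ℝ) : ℂ) ^ s) =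
      (1 - (p : ℂ)⁻¹) * ((p : ℂ) ^ (-1 - s)) ^ n := by
  rw [measureReal_norm_eq_zpow μ hμ, Complex.ofReal_zpow_neg_cpow p.cast_nonneg,
    Complex.real_smul, sub_eq_add_neg (-1),
    Complex.cpow_add _ _ (Nat.cast_ne_zero.2 (Fact.out : p.Prime).ne_zero), Complex.cpow_neg_one]
  push_cast
  ring

end Padic

open Padic

/-- Example 3.3 (Example-1): the local zeta integral over `ℤ_p`. -/
theorem padic_zeta_integral_Zp (p : ℕ) [Fact p.Prime]
    [MeasurableSpace ℚ_[p]] [BorelSpace ℚ_[p]]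
    (μ : Measure ℚ_[p]) [μ.IsAddHaarMeasure]
    (hμ : μ {x : ℚ_[p] | ‖x‖ ≤ 1} = 1)
    (s : ℂ) (hs : -1 < s.re) :
    ∫ x in {x : ℚ_[p] | ‖x‖ ≤ 1}, (‖x‖ : ℂ) ^ s ∂μ
      = (1 - (p : ℂ)⁻¹) / (1 - (p : ℂ) ^ (-1 - s)) := by
  have hp : (1 : ℝ) < p := mod_cast (Fact.out : p.Prime).one_lt
  have hr : ‖(p : ℂ) ^ (-1 - s)‖ < 1 := by
    rw [Complex.norm_natCast_cpow_of_pos (Fact.out : p.Prime).pos]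
    refine Real.rpow_lt_one_of_one_lt_of_neg hp ?_
    simp only [Complex.sub_re, Complex.neg_re, Complex.one_re]
    linarith
  have hfin (n : ℕ) : μ {x : ℚ_[p] | ‖x‖ = (p : ℝ) ^ (-n : ℤ)} ≠ ⊤ :=
    measure_ne_top_of_subset (fun x (hx : ‖x‖ = _) ↦ hx.le.trans (zpow_le_one_of_nonpos₀ hp.le
      (by simp))) (hμ ▸ ENNReal.one_ne_top)
  have hsum := hasSum_setIntegral_iUnion_of_eqOn_const (f := fun x ↦ (‖x‖ : ℂ) ^ s)
    (c := fun n : ℕ ↦ (((p : ℝ) ^ (-n : ℤ) : ℝ) : ℂ) ^ s)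
    (fun n ↦ (isClosed_eq continuous_norm continuous_const).measurableSet)
    pairwise_disjoint_setOf_norm_eq_zpow hfin (fun n x hx ↦ congrArg (fun t : ℝ ↦ (t : ℂ) ^ s) hx)
    (by
      simp only [measureReal_norm_eq_zpow_smul_cpow μ hμ, norm_mul, norm_pow]
      exact (summable_geometric_of_lt_one (norm_nonneg _) hr).mul_left _)
  simp only [measureReal_norm_eq_zpow_smul_cpow μ hμ, iUnion_setOf_norm_eq_zpow] at hsum
  rw [← setIntegral_congr_set (sdiff_null_ae_eq_self (measure_singleton 0)), div_eq_mul_inv]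
  exact hsum.unique ((hasSum_geometric_of_norm_lt_one hr).mul_left _)
end

section
/- Let p be a prime number and let s ∈ ℂ with Re(s) > -1. Then ∫_{ℤ_p^× × ℤ_p^×} |x - y|_p^s dμ(x)dμ(y) = p^{-2}(p - 1)(p - 2) + p^{-2-s}(p - 1)·(1 - p^{-1})/(1 - p^{-1-s}). -/
/-!
Off the diagonal, which is null, `ℤ_p^× × ℤ_p^×` is the disjoint union of the shells
`Tₙ = {‖x - y‖ = p⁻ⁿ}`, on which the integrand is the constant `p^{-ns}`. The shear
`(x, y) ↦ (x, y - x)` preserves `μ ⊗ μ`, and for `n ≥ 1` the ultrametric inequality makes `y` a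
unit as soon as `x` is, so `Tₙ` is the preimage of `ℤ_p^× × pⁿℤ_p^×` and has measure
`(1 - 1/p)² p⁻ⁿ`; likewise `T₀` is `ℤ_p^× × ℤ_p^×` minus the preimage of `ℤ_p^× × pℤ_p`, of
measure `(1 - 1/p)(1 - 2/p)`. The ball measures `μ(pⁿℤ_p) = p⁻ⁿ` come from tiling `ℤ_p` by the
`pⁿ` translates of `pⁿℤ_p`. Summing the geometric series in `p^{-1-s}` gives the formula.
-/

open MeasureTheory Complex
open Metric Function

lemma Complex.ofReal_zpow_neg_natCast_cpow (p n : ℕ) (s : ℂ) :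
    (((p : ℝ) ^ (-(n : ℤ)) : ℝ) : ℂ) ^ s = ((p : ℂ) ^ (-s)) ^ n := by
  rw [← cpow_nat_mul, zpow_neg, zpow_natCast, ofReal_inv, inv_cpow_ofReal_nonneg (by positivity),
    ← cpow_neg, ofReal_pow, ofReal_natCast, ← natCast_cpow_natCast_mul, mul_neg]

lemma Complex.norm_natCast_cpow_neg_one_sub_lt_one {p : ℕ} (hp : 1 < p) {s : ℂ}
    (hs : -1 < s.re) : ‖(p : ℂ) ^ (-1 - s)‖ < 1 := by
  rw [norm_natCast_cpow_of_pos (by omega)]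
  exact Real.rpow_lt_one_of_one_lt_of_neg (by exact_mod_cast hp)
    (by simp only [sub_re, neg_re, one_re]; linarith)

namespace MeasureTheory

theorem hasSum_setIntegral_iUnion_of_eqOn_const_s3 {X E ι : Type*}
    [MeasurableSpace X] [NormedAddCommGroup E] [NormedSpace ℝ E] [CompleteSpace E] [Countable ι]
    {μ : Measure X} {s : ι → Set X} {f : X → E} {c : ι → E} (hs : ∀ i, MeasurableSet (s i))
    (hd : Pairwise (Disjoint on s)) (hμs : ∀ i, μ (s i) ≠ ⊤)
    (hf : ∀ i, Set.EqOn f (fun _ ↦ c i) (s i)) (hc : Summable fun i ↦ ‖μ.real (s i) • c i‖) :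
    HasSum (fun i ↦ μ.real (s i) • c i) (∫ x in ⋃ i, s i, f x ∂μ) := by
  have hint (i : ι) : IntegrableOn f (s i) μ :=
    (integrableOn_const (hμs i)).congr_fun (hf i).symm (hs i)
  have hval (i : ι) : ∫ x in s i, f x ∂μ = μ.real (s i) • c i := by
    rw [setIntegral_congr_fun (hs i) (hf i), setIntegral_const]
  have hnorm (i : ι) : ∫ x in s i, ‖f x‖ ∂μ = ‖μ.real (s i) • c i‖ := by
    rw [setIntegral_congr_fun (hs i) fun x hx ↦ congrArg norm (hf i hx), setIntegral_const,
      norm_smul, Real.norm_of_nonneg measureReal_nonneg, smul_eq_mul]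
  simpa only [hval] using hasSum_integral_iUnion hs hd
    (integrableOn_iUnion_of_summable_integral_norm hint (by simpa only [hnorm] using hc))

section

variable {G : Type*} [MeasurableSpace G] [AddGroup G] [MeasurableAdd₂ G] [MeasurableNeg G]
  (μ : Measure G) [SFinite μ] [μ.IsAddRightInvariant]

lemma measure_prod_fst_mem_sub_mem {A B : Set G} (hA : MeasurableSet A) (hB : MeasurableSet B) :
    (μ.prod μ) {z | z.1 ∈ A ∧ z.2 - z.1 ∈ B} = μ A * μ B := by
  rw [← Measure.prod_prod, ← (measurePreserving_prod_sub μ μ).measure_preimage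
    (hA.prod hB).nullMeasurableSet]
  rfl

lemma measureReal_prod_fst_mem_sub_mem {A B : Set G} (hA : MeasurableSet A)
    (hB : MeasurableSet B) :
    (μ.prod μ).real {z | z.1 ∈ A ∧ z.2 - z.1 ∈ B} = μ.real A * μ.real B := by
  simp only [measureReal_def, measure_prod_fst_mem_sub_mem μ hA hB, ENNReal.toReal_mul]

lemma measure_prod_setOf_fst_eq_snd [MeasurableSingletonClass G] [NullSingletonClass μ] :
    (μ.prod μ) {z | z.1 = z.2} = 0 := by
  simpa [sub_eq_zero, eq_comm] using
    measure_prod_fst_mem_sub_mem μ MeasurableSet.univ (measurableSet_singleton 0)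

end

end MeasureTheory

namespace Padic

variable {p : ℕ} [hp : Fact p.Prime]

lemma sphere_zero_zpow_eq_diff (n : ℤ) :
    sphere (0 : ℚ_[p]) ((p : ℝ) ^ (-n)) =
      closedBall 0 ((p : ℝ) ^ (-n)) \ closedBall 0 ((p : ℝ) ^ (-(n + 1))) := by
  ext x
  rw [mem_sphere_zero_iff_norm, Set.mem_sdiff, mem_closedBall_zero_iff, mem_closedBall_zero_iff,
    norm_le_pow_iff_norm_lt_pow_add_one x (-(n + 1)), show -(n + 1) + 1 = -n by ring, not_lt]
  exact ⟨fun h ↦ ⟨h.le, h.ge⟩, fun h ↦ h.1.antisymm h.2⟩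

lemma exists_norm_eq_zpow_of_norm_le_one {x : ℚ_[p]} (hx : x ≠ 0) (h : ‖x‖ ≤ 1) :
    ∃ n : ℕ, ‖x‖ = (p : ℝ) ^ (-n : ℤ) :=
  ⟨x.valuation.toNat, by
    rw [norm_eq_zpow_neg_valuation hx, Int.toNat_of_nonneg ((norm_le_one_iff_val_nonneg x).1 h)]⟩

lemma norm_sub_le_one {x y : ℚ_[p]} (hx : ‖x‖ = 1) (hy : ‖y‖ = 1) : ‖x - y‖ ≤ 1 :=
  sub_eq_add_neg x y ▸ (nonarchimedean x (-y)).trans (by simp [hx, hy])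

lemma norm_eq_one_of_norm_sub_lt_one {x y : ℚ_[p]} (hx : ‖x‖ = 1) (h : ‖y - x‖ < 1) :
    ‖y‖ = 1 := by
  simpa [hx] using norm_eq_of_norm_add_lt_right (z1 := y) (z2 := -x)
    (by simpa [← sub_eq_add_neg, hx])

lemma closedBall_one_eq_biUnion (n : ℕ) :
    closedBall (0 : ℚ_[p]) 1 =
      ⋃ a ∈ Finset.range (p ^ n), closedBall (a : ℚ_[p]) ((p : ℝ) ^ (-n : ℤ)) := by
  ext x
  simp only [Set.mem_iUnion, Finset.mem_range, exists_prop]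
  constructor
  · intro hx
    set y : ℤ_[p] := ⟨x, mem_closedBall_zero_iff.1 hx⟩
    refine ⟨y.appr n, y.appr_lt n, ?_⟩
    rw [mem_closedBall, dist_eq_norm]
    exact_mod_cast (PadicInt.norm_le_pow_iff_mem_span_pow _ n).2 (y.appr_spec n)
  · rintro ⟨a, -, hx⟩
    have ha : (a : ℚ_[p]) ∈ closedBall 0 1 :=
      mem_closedBall_zero_iff.2 (by simpa using norm_int_le_one (p := p) a)
    rw [IsUltrametricDist.closedBall_eq_of_mem ha]
    exact closedBall_subset_closedBall (zpow_le_one_of_nonpos₀ (mod_cast hp.out.one_le)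
      (by omega)) hx

lemma pairwiseDisjoint_closedBall_natCast (n : ℕ) :
    (Finset.range (p ^ n) : Set ℕ).PairwiseDisjoint
      fun a ↦ closedBall (a : ℚ_[p]) ((p : ℝ) ^ (-n : ℤ)) := by
  intro a ha b hb hab
  refine Set.disjoint_left.2 fun x hxa hxb ↦ hab ?_
  have hdist : ‖((b - a : ℤ) : ℚ_[p])‖ ≤ (p : ℝ) ^ (-n : ℤ) := by
    push_cast
    rw [← dist_eq_norm]
    exact (IsUltrametricDist.dist_triangle_max _ x _).trans
      (max_le (dist_comm x (b : ℚ_[p]) ▸ hxb) hxa)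
  have hdvd := (norm_int_le_pow_iff_dvd _ n).1 hdist
  simp only [Finset.coe_range, Set.mem_Iio] at ha hb
  exact (Nat.modEq_iff_dvd.2 (by exact_mod_cast hdvd)).eq_of_lt_of_lt ha hb

def unitPairShell (p : ℕ) [Fact p.Prime] (n : ℕ) : Set (ℚ_[p] × ℚ_[p]) :=
  {z | ‖z.1‖ = 1 ∧ ‖z.2‖ = 1 ∧ ‖z.1 - z.2‖ = (p : ℝ) ^ (-n : ℤ)}

lemma pairwise_disjoint_unitPairShell : Pairwise (Disjoint on unitPairShell p) := by
  intro m n hmn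
  refine Set.disjoint_left.2 fun z hm hn ↦ hmn ?_
  have := zpow_right_injective₀ (by exact_mod_cast hp.out.pos) (by exact_mod_cast hp.out.ne_one)
    (hm.2.2.symm.trans hn.2.2)
  omega

lemma iUnion_unitPairShell :
    ⋃ n, unitPairShell p n = (sphere 0 1 ×ˢ sphere 0 1) \ {z | z.1 = z.2} := by
  ext ⟨x, y⟩
  simp only [unitPairShell, Set.mem_iUnion, Set.mem_ofPred_eq, Set.mem_sdiff, Set.mem_prod,
    mem_sphere_zero_iff_norm]
  constructor
  · rintro ⟨n, hx, hy, h⟩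
    refine ⟨⟨hx, hy⟩, fun hxy ↦ ?_⟩
    rw [hxy, sub_self, norm_zero] at h
    exact (zpow_pos (by exact_mod_cast hp.out.pos) _).ne h
  · rintro ⟨⟨hx, hy⟩, hxy⟩
    obtain ⟨n, hn⟩ :=
      exists_norm_eq_zpow_of_norm_le_one (sub_ne_zero.2 hxy) (norm_sub_le_one hx hy)
    exact ⟨n, hx, hy, hn⟩

lemma unitPairShell_succ (n : ℕ) :
    unitPairShell p (n + 1) =
      {z | z.1 ∈ sphere 0 1 ∧ z.2 - z.1 ∈ sphere 0 ((p : ℝ) ^ (-(n + 1 : ℕ) : ℤ))} := by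
  ext ⟨x, y⟩
  simp only [unitPairShell, Set.mem_ofPred_eq, mem_sphere_zero_iff_norm, norm_sub_rev y x]
  refine ⟨fun ⟨hx, _, h⟩ ↦ ⟨hx, h⟩, fun ⟨hx, h⟩ ↦ ⟨hx, ?_, h⟩⟩
  refine norm_eq_one_of_norm_sub_lt_one hx ?_
  rw [norm_sub_rev, h]
  exact zpow_lt_one_of_neg₀ (by exact_mod_cast hp.out.one_lt) (by omega)

lemma unitPairShell_zero :
    unitPairShell p 0 = (sphere 0 1 ×ˢ sphere 0 1) \
      {z | z.1 ∈ sphere 0 1 ∧ z.2 - z.1 ∈ closedBall 0 ((p : ℝ) ^ (-1 : ℤ))} := by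
  ext ⟨x, y⟩
  have key := Set.ext_iff.1 (sphere_zero_zpow_eq_diff (p := p) 0) (x - y)
  simp only [unitPairShell, Set.mem_ofPred_eq, Set.mem_sdiff, Set.mem_prod,
    mem_sphere_zero_iff_norm, mem_closedBall_zero_iff, norm_sub_rev y x, Nat.cast_zero, neg_zero,
    zpow_zero, zero_add] at key ⊢
  constructor
  · rintro ⟨hx, hy, h⟩
    exact ⟨⟨hx, hy⟩, fun ⟨_, h'⟩ ↦ (key.1 h).2 h'⟩
  · rintro ⟨⟨hx, hy⟩, h⟩
    exact ⟨hx, hy, key.2 ⟨norm_sub_le_one hx hy, fun h' ↦ h ⟨hx, h'⟩⟩⟩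

lemma cpow_norm_sub_eqOn_unitPairShell (s : ℂ) (n : ℕ) :
    Set.EqOn (fun z : ℚ_[p] × ℚ_[p] ↦ (‖z.1 - z.2‖ : ℂ) ^ s) (fun _ ↦ ((p : ℂ) ^ (-s)) ^ n)
      (unitPairShell p n) := fun z hz ↦ by
  simp only [hz.2.2, ofReal_zpow_neg_natCast_cpow]

variable [MeasurableSpace ℚ_[p]] (μ : Measure ℚ_[p]) [μ.IsAddHaarMeasure]

lemma measure_unitPairShell_ne_top (n : ℕ) : (μ.prod μ) (unitPairShell p n) ≠ ⊤ := by
  refine ne_top_of_le_ne_top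
    ((isCompact_sphere (0 : ℚ_[p]) 1).prod (isCompact_sphere 0 1)).measure_lt_top.ne
    (measure_mono fun z hz ↦ ?_)
  exact ⟨mem_sphere_zero_iff_norm.2 hz.1, mem_sphere_zero_iff_norm.2 hz.2.1⟩

variable [BorelSpace ℚ_[p]]

lemma measurableSet_unitPairShell (n : ℕ) : MeasurableSet (unitPairShell p n) := by
  unfold unitPairShell
  measurability

lemma measureReal_closedBall_zpow (hμ : μ (closedBall 0 1) = 1) (n : ℕ) :
    μ.real (closedBall (0 : ℚ_[p]) ((p : ℝ) ^ (-n : ℤ))) = (p : ℝ) ^ (-n : ℤ) := by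
  have h : μ.real (closedBall 0 1) = 1 := by simp [measureReal_def, hμ]
  rw [closedBall_one_eq_biUnion n, measureReal_biUnion_finset
    (pairwiseDisjoint_closedBall_natCast n) (fun _ _ ↦ measurableSet_closedBall)
    (fun _ _ ↦ measure_closedBall_lt_top.ne)] at h
  simp only [measureReal_def, Measure.addHaar_closedBall_center, Finset.sum_const,
    Finset.card_range, nsmul_eq_mul, Nat.cast_pow] at h
  exact (eq_inv_of_mul_eq_one_right h).trans (by rw [zpow_neg, zpow_natCast])

lemma measureReal_sphere_zpow (hμ : μ (closedBall 0 1) = 1) (n : ℕ) :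
    μ.real (sphere (0 : ℚ_[p]) ((p : ℝ) ^ (-n : ℤ))) =
      (p : ℝ) ^ (-n : ℤ) * (1 - (p : ℝ)⁻¹) := by
  rw [sphere_zero_zpow_eq_diff, measureReal_sdiff (closedBall_subset_closedBall ?_)
    measurableSet_closedBall measure_closedBall_lt_top.ne]
  · have h := measureReal_closedBall_zpow μ hμ (n + 1)
    push_cast at h
    rw [h, measureReal_closedBall_zpow μ hμ n, neg_add,
      zpow_add₀ (by exact_mod_cast hp.out.ne_zero), zpow_neg_one]
    ring
  · exact zpow_le_zpow_right₀ (mod_cast hp.out.one_le) (by omega)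

lemma measureReal_sphere_one (hμ : μ (closedBall 0 1) = 1) :
    μ.real (sphere (0 : ℚ_[p]) 1) = 1 - (p : ℝ)⁻¹ := by
  simpa using measureReal_sphere_zpow μ hμ 0

lemma measureReal_unitPairShell_zero (hμ : μ (closedBall 0 1) = 1) :
    (μ.prod μ).real (unitPairShell p 0) = (1 - (p : ℝ)⁻¹) * (1 - 2 * (p : ℝ)⁻¹) := by
  have hsub : {z : ℚ_[p] × ℚ_[p] | z.1 ∈ sphere 0 1 ∧
      z.2 - z.1 ∈ closedBall 0 ((p : ℝ) ^ (-1 : ℤ))} ⊆ sphere 0 1 ×ˢ sphere 0 1 := by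
    rintro ⟨x, y⟩ ⟨hx, hxy⟩
    rw [mem_sphere_zero_iff_norm] at hx
    refine ⟨mem_sphere_zero_iff_norm.2 hx, mem_sphere_zero_iff_norm.2
      (norm_eq_one_of_norm_sub_lt_one hx ((mem_closedBall_zero_iff.1 hxy).trans_lt ?_))⟩
    exact zpow_lt_one_of_neg₀ (by exact_mod_cast hp.out.one_lt) (by omega)
  have hfin : (μ.prod μ) (sphere 0 1 ×ˢ sphere 0 1) ≠ ⊤ :=
    ((isCompact_sphere 0 1).prod (isCompact_sphere 0 1)).measure_lt_top.ne
  have hball : μ.real (closedBall 0 ((p : ℝ) ^ (-1 : ℤ))) = (p : ℝ)⁻¹ := by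
    simpa using measureReal_closedBall_zpow μ hμ 1
  rw [unitPairShell_zero, measureReal_sdiff hsub (by measurability) hfin, measureReal_prod_prod,
    measureReal_prod_fst_mem_sub_mem μ isClosed_sphere.measurableSet measurableSet_closedBall,
    measureReal_sphere_one μ hμ, hball]
  ring

lemma measureReal_unitPairShell_succ (hμ : μ (closedBall 0 1) = 1) (n : ℕ) :
    (μ.prod μ).real (unitPairShell p (n + 1)) = (1 - (p : ℝ)⁻¹) ^ 2 * (p : ℝ)⁻¹ ^ (n + 1) := by
  rw [unitPairShell_succ, measureReal_prod_fst_mem_sub_mem μ isClosed_sphere.measurableSet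
    isClosed_sphere.measurableSet, measureReal_sphere_one μ hμ, measureReal_sphere_zpow μ hμ,
    zpow_neg, zpow_natCast, inv_pow]
  ring

lemma sphere_prod_sphere_ae_eq_iUnion_unitPairShell :
    (sphere (0 : ℚ_[p]) 1 ×ˢ sphere 0 1 : Set (ℚ_[p] × ℚ_[p])) =ᵐ[μ.prod μ]
      ⋃ n, unitPairShell p n := by
  rw [iUnion_unitPairShell]
  exact (sdiff_null_ae_eq_self (measure_prod_setOf_fst_eq_snd μ)).symm

lemma hasSum_measureReal_unitPairShell_smul (hμ : μ (closedBall 0 1) = 1) {s : ℂ}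
    (hs : -1 < s.re) :
    HasSum (fun n ↦ (μ.prod μ).real (unitPairShell p n) • ((p : ℂ) ^ (-s)) ^ n)
      ((1 - (p : ℂ)⁻¹) ^ 2 * (p : ℂ) ^ (-1 - s) * (1 - (p : ℂ) ^ (-1 - s))⁻¹
        + (1 - (p : ℂ)⁻¹) * (1 - 2 * (p : ℂ)⁻¹)) := by
  have hpw : (p : ℂ)⁻¹ * (p : ℂ) ^ (-s) = (p : ℂ) ^ (-1 - s) := by
    rw [← cpow_neg_one, ← cpow_add _ _ (by exact_mod_cast hp.out.ne_zero), sub_eq_add_neg]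
  have htail : HasSum
      (fun n ↦ (μ.prod μ).real (unitPairShell p (n + 1)) • ((p : ℂ) ^ (-s)) ^ (n + 1))
      ((1 - (p : ℂ)⁻¹) ^ 2 * (p : ℂ) ^ (-1 - s) * (1 - (p : ℂ) ^ (-1 - s))⁻¹) := by
    refine ((hasSum_geometric_of_norm_lt_one
      (norm_natCast_cpow_neg_one_sub_lt_one hp.out.one_lt hs)).mul_left _).congr_fun fun n ↦ ?_
    rw [measureReal_unitPairShell_succ μ hμ, ← hpw, real_smul]
    push_cast
    ring
  have hsum := (hasSum_nat_add_iff
    (f := fun n ↦ (μ.prod μ).real (unitPairShell p n) • ((p : ℂ) ^ (-s)) ^ n) 1).1 htail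
  rw [Finset.sum_range_one, measureReal_unitPairShell_zero μ hμ, pow_zero, real_smul,
    mul_one] at hsum
  push_cast at hsum
  exact hsum

end Padic

open Padic in
/-- Example-4: the integral of `|x-y|_p^s` over `ℤ_p^× × ℤ_p^×`. -/
theorem padic_zeta_integral_diff_units (p : ℕ) [Fact p.Prime]
    [MeasurableSpace ℚ_[p]] [BorelSpace ℚ_[p]]
    (μ : Measure ℚ_[p]) [μ.IsAddHaarMeasure]
    (hμ : μ {x : ℚ_[p] | ‖x‖ ≤ 1} = 1)
    (s : ℂ) (hs : -1 < s.re) :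
    ∫ z in ({x : ℚ_[p] | ‖x‖ = 1} ×ˢ {x : ℚ_[p] | ‖x‖ = 1}),
        (‖z.1 - z.2‖ : ℂ) ^ s ∂(μ.prod μ)
      = (p : ℂ) ^ (-2 : ℂ) * ((p : ℂ) - 1) * ((p : ℂ) - 2)
        + (p : ℂ) ^ (-2 - s) * ((p : ℂ) - 1) *
            ((1 - (p : ℂ)⁻¹) / (1 - (p : ℂ) ^ (-1 - s))) := by
  have hp := (Fact.out : p.Prime)
  have hμ' : μ (closedBall 0 1) = 1 := by simpa [closedBall, dist_eq_norm] using hμ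
  have hU : {x : ℚ_[p] | ‖x‖ = 1} = sphere 0 1 := by ext; simp
  have hseries := hasSum_measureReal_unitPairShell_smul μ hμ' hs
  rw [hU, setIntegral_congr_set (sphere_prod_sphere_ae_eq_iUnion_unitPairShell μ),
    (hasSum_setIntegral_iUnion_of_eqOn_const_s3 measurableSet_unitPairShell
      pairwise_disjoint_unitPairShell (measure_unitPairShell_ne_top μ)
      (cpow_norm_sub_eqOn_unitPairShell s) (summable_norm_iff.2 hseries.summable)).unique hseries]
  have hp0 : (p : ℂ) ≠ 0 := by exact_mod_cast hp.ne_zero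
  have hw : 1 - (p : ℂ) ^ (-1 - s) ≠ 0 := sub_ne_zero.2 fun h ↦ by
    simpa [← h] using norm_natCast_cpow_neg_one_sub_lt_one hp.one_lt hs
  have h2 : (p : ℂ) ^ (-2 : ℂ) = ((p : ℂ) ^ 2)⁻¹ := by rw [cpow_neg, cpow_ofNat]
  have h2s : (p : ℂ) ^ (-2 - s) = (p : ℂ)⁻¹ * (p : ℂ) ^ (-1 - s) := by
    rw [← cpow_neg_one, ← cpow_add _ _ hp0]
    ring_nf
  rw [h2, h2s]
  field_simp
  ring
end

section
/- Let a, b be real numbers with a > -1, b > -1 and a + b < -1. Then the function x ↦ |x|^a |1-x|^b is Lebesgue-integrable on ℝ. -/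
open MeasureTheory Set Real

lemma absRpow_intervalIntegrable {r : ℝ} (hr : -1 < r) (a b : ℝ) :
    IntervalIntegrable (fun x : ℝ => |x| ^ r) volume a b := by
  have H : ∀ c : ℝ, 0 ≤ c → IntervalIntegrable (fun x : ℝ => |x| ^ r) volume 0 c := by
    intro c hc
    have h1 := intervalIntegral.intervalIntegrable_rpow' (a := 0) (b := c) hr
    rw [intervalIntegrable_iff, uIoc_of_le hc] at h1 ⊢
    exact h1.congr_fun (fun x hx => by rw [abs_of_pos hx.1]) measurableSet_Ioc
  have H' : ∀ c : ℝ, IntervalIntegrable (fun x : ℝ => |x| ^ r) volume 0 c := by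
    intro c
    rcases le_total 0 c with hc | hc
    · exact H c hc
    · rw [IntervalIntegrable.iff_comp_neg]
      simpa using H (-c) (by linarith)
  exact (H' a).symm.trans (H' b)

lemma fp_measurable (a b c : ℝ) :
    Measurable (fun x : ℝ => |c - x| ^ a * |1 - (c - x)| ^ b) := by
  have h1 : Measurable (fun x : ℝ => c - x) := measurable_const.sub measurable_id
  exact (h1.abs.pow measurable_const).mul ((measurable_const.sub h1).abs.pow measurable_const)

/-- Integrability of the 4-point Koba-Nielsen integrand on `ℝ` in the region of
convergence. -/
theorem real_four_point_integrable (a b : ℝ)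
    (ha : -1 < a) (hb : -1 < b) (hab : a + b < -1) :
    Integrable (fun x : ℝ => |x| ^ a * |1 - x| ^ b) := by
  have meas : Measurable (fun x : ℝ => |x| ^ a * |1 - x| ^ b) :=
    (measurable_id.abs.pow measurable_const).mul
      ((measurable_const.sub measurable_id).abs.pow measurable_const)
  rw [← integrableOn_univ]
  have hsub : (univ : Set ℝ) ⊆ Iio (-1) ∪ (Icc (-1) 2 ∪ Ioi 2) := by
    intro x _
    rcases lt_or_ge x (-1) with h | h
    · exact Or.inl h
    · rcases le_or_gt x 2 with h2 | h2
      · exact Or.inr (Or.inl ⟨h, h2⟩)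
      · exact Or.inr (Or.inr h2)
  -- middle part
  have mid : IntegrableOn (fun x : ℝ => |x| ^ a * |1 - x| ^ b) (Icc (-1) 2) := by
    rw [← intervalIntegrable_iff_integrableOn_Icc_of_le (by norm_num : (-1:ℝ) ≤ 2)]
    have h1 : IntervalIntegrable (fun x : ℝ => |x| ^ a * |1 - x| ^ b) volume (-1) (1/2) := by
      apply IntervalIntegrable.mul_continuousOn (absRpow_intervalIntegrable ha _ _)
      apply ContinuousOn.rpow_const
        ((continuous_const.sub continuous_id).abs.continuousOn)
      intro x hx
      left
      rw [Set.uIcc_of_le (by norm_num : (-1:ℝ) ≤ 1/2)] at hx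
      have : (0:ℝ) < 1 - x := by have := hx.2; linarith
      simpa [abs_ne_zero] using this.ne'
    have h2 : IntervalIntegrable (fun x : ℝ => |x| ^ a * |1 - x| ^ b) volume (1/2) 2 := by
      have hii : IntervalIntegrable (fun x : ℝ => |1 - x| ^ b) volume (1/2) 2 := by
        have := (absRpow_intervalIntegrable hb (-1) (1/2)).comp_sub_left 1
        norm_num at this
        exact this.symm
      apply hii.continuousOn_mul
      apply ContinuousOn.rpow_const continuous_abs.continuousOn
      intro x hx
      left
      rw [Set.uIcc_of_le (by norm_num : (1:ℝ)/2 ≤ 2)] at hx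
      have : (0:ℝ) < x := by have := hx.1; linarith
      simpa [abs_ne_zero] using this.ne'
    exact h1.trans h2
  -- positive tail
  have tail_pos : IntegrableOn (fun x : ℝ => |x| ^ a * |1 - x| ^ b) (Ioi 2) := by
    have base : IntegrableOn (fun x : ℝ => x ^ (a + b)) (Ioi 2) :=
      integrableOn_Ioi_rpow_of_lt hab two_pos
    refine ((base.const_mul (max 1 (2 ^ (-b)))).mono' meas.aestronglyMeasurable.restrict ?_)
    filter_upwards [ae_restrict_mem measurableSet_Ioi] with x hx
    have hx2 : (2:ℝ) < x := hx
    have hx0 : (0:ℝ) < x := by linarith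
    have hx1 : (0:ℝ) < x - 1 := by linarith
    have hxub : x - 1 ≤ x := by linarith
    have key : (x - 1) ^ b ≤ max 1 (2 ^ (-b)) * x ^ b := by
      rcases le_or_gt 0 b with hb0 | hb0
      · calc (x - 1) ^ b ≤ x ^ b := rpow_le_rpow hx1.le hxub hb0
          _ = 1 * x ^ b := (one_mul _).symm
          _ ≤ max 1 (2 ^ (-b)) * x ^ b := by
              apply mul_le_mul_of_nonneg_right (le_max_left _ _) (rpow_nonneg hx0.le b)
      · have hhalf : x / 2 ≤ x - 1 := by linarith
        have hhalf0 : (0:ℝ) < x / 2 := by linarith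
        calc (x - 1) ^ b ≤ (x / 2) ^ b := rpow_le_rpow_of_nonpos hhalf0 hhalf hb0.le
          _ = 2 ^ (-b) * x ^ b := by
              rw [div_rpow hx0.le (by norm_num : (0:ℝ) ≤ 2), rpow_neg (by norm_num : (0:ℝ) ≤ 2),
                div_eq_mul_inv, mul_comm]
          _ ≤ max 1 (2 ^ (-b)) * x ^ b := by
              apply mul_le_mul_of_nonneg_right (le_max_right _ _) (rpow_nonneg hx0.le b)
    have heq : |x| ^ a * |1 - x| ^ b = x ^ a * (x - 1) ^ b := by
      rw [abs_of_pos hx0, abs_of_neg (by linarith : 1 - x < 0)]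
      ring_nf
    rw [Real.norm_eq_abs, abs_of_nonneg (by positivity), heq]
    calc x ^ a * (x - 1) ^ b ≤ x ^ a * (max 1 (2 ^ (-b)) * x ^ b) := by
          apply mul_le_mul_of_nonneg_left key (rpow_nonneg hx0.le a)
      _ = max 1 (2 ^ (-b)) * x ^ (a + b) := by rw [rpow_add hx0]; ring
  -- negative tail
  have tail_neg : IntegrableOn (fun x : ℝ => |x| ^ a * |1 - x| ^ b) (Iio (-1)) := by
    rw [← (Measure.measurePreserving_neg (volume : Measure ℝ)).integrableOn_comp_preimage
        (Homeomorph.neg ℝ).measurableEmbedding]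
    simp only [Function.comp_def, neg_preimage, neg_Iio, neg_neg]
    have base : IntegrableOn (fun x : ℝ => x ^ (a + b)) (Ioi 1) :=
      integrableOn_Ioi_rpow_of_lt hab one_pos
    have measn : Measurable (fun x : ℝ => |- x| ^ a * |1 - - x| ^ b) :=
      (measurable_neg.abs.pow measurable_const).mul
        ((measurable_const.sub measurable_neg).abs.pow measurable_const)
    refine ((base.const_mul (max 1 (2 ^ b))).mono' measn.aestronglyMeasurable.restrict ?_)
    filter_upwards [ae_restrict_mem measurableSet_Ioi] with x hx
    have hx1 : (1:ℝ) < x := hx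
    have hx0 : (0:ℝ) < x := by linarith
    have hx1p : (0:ℝ) < 1 + x := by linarith
    have key : (1 + x) ^ b ≤ max 1 (2 ^ b) * x ^ b := by
      rcases le_or_gt 0 b with hb0 | hb0
      · calc (1 + x) ^ b ≤ (2 * x) ^ b := rpow_le_rpow hx1p.le (by linarith) hb0
          _ = 2 ^ b * x ^ b := mul_rpow (by norm_num) hx0.le
          _ ≤ max 1 (2 ^ b) * x ^ b := by
              apply mul_le_mul_of_nonneg_right (le_max_right _ _) (rpow_nonneg hx0.le b)
      · calc (1 + x) ^ b ≤ x ^ b := rpow_le_rpow_of_nonpos hx0 (by linarith) hb0.le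
          _ = 1 * x ^ b := (one_mul _).symm
          _ ≤ max 1 (2 ^ b) * x ^ b := by
              apply mul_le_mul_of_nonneg_right (le_max_left _ _) (rpow_nonneg hx0.le b)
    have heq : |-x| ^ a * |1 - - x| ^ b = x ^ a * (1 + x) ^ b := by
      rw [abs_neg, abs_of_pos hx0, sub_neg_eq_add, abs_of_pos hx1p]
    rw [Real.norm_eq_abs, abs_of_nonneg (by positivity), heq]
    calc x ^ a * (1 + x) ^ b ≤ x ^ a * (max 1 (2 ^ b) * x ^ b) := by
          apply mul_le_mul_of_nonneg_left key (rpow_nonneg hx0.le a)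
      _ = max 1 (2 ^ b) * x ^ (a + b) := by rw [rpow_add hx0]; ring
  exact ((tail_neg.union (mid.union tail_pos)).mono_set hsub)
end

section
/- Let a, b be real numbers with a > -1, b > -1 and a + b < -1. Then ∫_ℝ |x|^a |1-x|^b dx = Γ(a+1)Γ(b+1)/Γ(a+b+2) + Γ(a+1)Γ(-a-b-1)/Γ(-b) + Γ(b+1)Γ(-a-b-1)/Γ(-a), where Γ denotes the Euler gamma function. -/
/-!
The integral splits at `0` and `1` into three channels. On `(0, 1)` it is Euler's Beta integral
`B(a + 1, b + 1)`. The inversion `x ↦ x⁻¹` maps `(0, 1)` onto `(1, ∞)` and turns the channel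
on `(1, ∞)` into the Beta integral `B(-a - b - 1, b + 1)`. The reflection `x ↦ 1 - x` exchanges
`(-∞, 0)` with `(1, ∞)` and `a` with `b`, so the channel on `(-∞, 0)` is `B(-a - b - 1, a + 1)`.
-/

open MeasureTheory Set

theorem Complex.betaIntegral_ofReal (p q : ℝ) :
    betaIntegral p q = ↑(∫ x in (0:ℝ)..1, x ^ (p - 1) * (1 - x) ^ (q - 1)) := by
  rw [betaIntegral, ← intervalIntegral.integral_ofReal]
  refine intervalIntegral.integral_congr fun x hx => ?_
  rw [uIcc_of_le zero_le_one] at hx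
  rw [ofReal_mul, ofReal_cpow hx.1, ofReal_cpow (by linarith [hx.2])]
  push_cast
  ring

theorem integral_Ioo_rpow_mul_one_sub_rpow {p q : ℝ} (hp : 0 < p) (hq : 0 < q) :
    ∫ x in Ioo (0:ℝ) 1, x ^ (p - 1) * (1 - x) ^ (q - 1)
      = Real.Gamma p * Real.Gamma q / Real.Gamma (p + q) := by
  have h := Complex.betaIntegral_eq_Gamma_mul_div p q (by simpa) (by simpa)
  rw [Complex.betaIntegral_ofReal, ← Complex.ofReal_add, Complex.Gamma_ofReal,
    Complex.Gamma_ofReal, Complex.Gamma_ofReal] at h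
  rw [← integral_Ioc_eq_integral_Ioo, ← intervalIntegral.integral_of_le zero_le_one]
  exact_mod_cast h

theorem integrableOn_Ioo_rpow_mul_one_sub_rpow {p q : ℝ} (hp : 0 < p) (hq : 0 < q) :
    IntegrableOn (fun x : ℝ => x ^ (p - 1) * (1 - x) ^ (q - 1)) (Ioo 0 1) := by
  have h := (Complex.betaIntegral_convergent (u := p) (v := q) (by simpa) (by simpa)).norm
  rw [intervalIntegrable_iff_integrableOn_Ioc_of_le zero_le_one] at h
  refine (h.mono_set Ioo_subset_Ioc_self).congr_fun (fun x hx => ?_) measurableSet_Ioo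
  have hx₀ : (0:ℝ) < x := hx.1
  have hx₁ : (0:ℝ) < 1 - x := by linarith [hx.2]
  dsimp only
  rw [show (1:ℂ) - x = ((1 - x : ℝ) : ℂ) by push_cast; rfl]
  simp only [norm_mul, Complex.norm_cpow_eq_rpow_re_of_pos hx₀,
    Complex.norm_cpow_eq_rpow_re_of_pos hx₁, Complex.sub_re, Complex.ofReal_re, Complex.one_re]

section Substitutions

variable {E : Type*} [NormedAddCommGroup E]

theorem image_inv_Ioo_zero_one : (fun t : ℝ => t⁻¹) '' Ioo 0 1 = Ioi 1 := by
  rw [image_inv_eq_inv, inv_Ioo_0_left one_pos, inv_one]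

theorem integrableOn_Ioi_one_iff_comp_inv [NormedSpace ℝ E] (g : ℝ → E) :
    IntegrableOn g (Ioi 1) ↔ IntegrableOn (fun t => (t ^ 2)⁻¹ • g t⁻¹) (Ioo 0 1) := by
  rw [← image_inv_Ioo_zero_one, integrableOn_image_iff_integrableOn_abs_deriv_smul
    measurableSet_Ioo (fun t ht => (hasDerivAt_inv ht.1.ne').hasDerivWithinAt) inv_injective.injOn]
  simp only [abs_neg, abs_inv, abs_sq]

theorem integral_Ioi_one_eq_integral_Ioo_comp_inv [NormedSpace ℝ E] (g : ℝ → E) :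
    ∫ x in Ioi 1, g x = ∫ t in Ioo 0 1, (t ^ 2)⁻¹ • g t⁻¹ := by
  rw [← image_inv_Ioo_zero_one, integral_image_eq_integral_abs_deriv_smul
    measurableSet_Ioo (fun t ht => (hasDerivAt_inv ht.1.ne').hasDerivWithinAt) inv_injective.injOn]
  simp only [abs_neg, abs_inv, abs_sq]

theorem integrableOn_Ioi_comp_sub_left_iff (g : ℝ → E) (c d : ℝ) :
    IntegrableOn (fun x => g (d - x)) (Ioi (d - c)) ↔ IntegrableOn g (Iio c) := by
  rw [← preimage_const_sub_Iio]
  exact (Measure.measurePreserving_sub_left volume d).integrableOn_comp_preimage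
    (MeasurableEquiv.subLeft d).measurableEmbedding

theorem integral_comp_sub_left_Ioi [NormedSpace ℝ E] (g : ℝ → E) (c d : ℝ) :
    ∫ x in Ioi (d - c), g (d - x) = ∫ x in Iio c, g x := by
  rw [← preimage_const_sub_Iio]
  exact (Measure.measurePreserving_sub_left volume d).setIntegral_preimage_emb
    (MeasurableEquiv.subLeft d).measurableEmbedding g _

theorem integral_eq_integral_Iio_add_integral_Ioo_add_integral_Ioi [NormedSpace ℝ E]
    {f : ℝ → E} {a b : ℝ} (hab : a ≤ b) (h₁ : IntegrableOn f (Iio a))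
    (h₂ : IntegrableOn f (Ioo a b)) (h₃ : IntegrableOn f (Ioi b)) :
    ∫ x, f x = (∫ x in Iio a, f x) + (∫ x in Ioo a b, f x) + ∫ x in Ioi b, f x := by
  have h₂' : IntegrableOn f (Ioc a b) := h₂.congr_set_ae Ioo_ae_eq_Ioc.symm
  rw [← intervalIntegral.integral_Iic_add_Ioi (h₁.congr_set_ae Iio_ae_eq_Iic.symm)
      (Ioc_union_Ioi_eq_Ioi hab ▸ h₂'.union h₃),
    ← Ioc_union_Ioi_eq_Ioi hab,
    setIntegral_union (Ioc_disjoint_Ioi le_rfl) measurableSet_Ioi h₂' h₃,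
    setIntegral_congr_set Iio_ae_eq_Iic, integral_Ioc_eq_integral_Ioo]
  exact (add_assoc _ _ _).symm

end Substitutions

noncomputable def kobaNielsen (a b x : ℝ) : ℝ := |x| ^ a * |1 - x| ^ b

theorem kobaNielsen_one_sub (a b x : ℝ) : kobaNielsen a b (1 - x) = kobaNielsen b a x := by
  rw [kobaNielsen, kobaNielsen, sub_sub_cancel, mul_comm]

theorem kobaNielsen_of_mem_Ioo (a b : ℝ) {x : ℝ} (hx : x ∈ Ioo (0:ℝ) 1) :
    kobaNielsen a b x = x ^ ((a + 1) - 1) * (1 - x) ^ ((b + 1) - 1) := by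
  rw [kobaNielsen, abs_of_pos hx.1, abs_of_pos (sub_pos.2 hx.2), add_sub_cancel_right,
    add_sub_cancel_right]

theorem inv_sq_smul_kobaNielsen_inv (a b : ℝ) {t : ℝ} (ht : t ∈ Ioo (0:ℝ) 1) :
    (t ^ 2)⁻¹ • kobaNielsen a b t⁻¹ = t ^ ((-a - b - 1) - 1) * (1 - t) ^ ((b + 1) - 1) := by
  obtain ⟨ht₀, ht₁⟩ := ht
  have h₁ : 0 < 1 - t := sub_pos.2 ht₁
  have hinv : 1 - t⁻¹ = -((1 - t) * t⁻¹) := by field_simp; ring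
  rw [kobaNielsen, abs_of_pos (inv_pos.2 ht₀), hinv, abs_neg,
    abs_of_pos (mul_pos h₁ (inv_pos.2 ht₀)), Real.mul_rpow h₁.le (inv_pos.2 ht₀).le,
    Real.inv_rpow ht₀.le, Real.inv_rpow ht₀.le, ← Real.rpow_two, ← Real.rpow_neg ht₀.le,
    ← Real.rpow_neg ht₀.le, ← Real.rpow_neg ht₀.le, smul_eq_mul, add_sub_cancel_right]
  calc t ^ (-2:ℝ) * (t ^ (-a) * ((1 - t) ^ b * t ^ (-b)))
      = t ^ (-2 + -a + -b) * (1 - t) ^ b := by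
        rw [Real.rpow_add ht₀, Real.rpow_add ht₀]; ring
    _ = t ^ ((-a - b - 1) - 1) * (1 - t) ^ b := by
        rw [show (-a - b - 1) - 1 = -2 + -a + -b by ring]

theorem integrableOn_Ioo_kobaNielsen {a b : ℝ} (ha : -1 < a) (hb : -1 < b) :
    IntegrableOn (kobaNielsen a b) (Ioo 0 1) :=
  (integrableOn_Ioo_rpow_mul_one_sub_rpow (neg_lt_iff_pos_add.1 ha)
    (neg_lt_iff_pos_add.1 hb)).congr_fun (fun _ hx => (kobaNielsen_of_mem_Ioo a b hx).symm)
    measurableSet_Ioo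

theorem integral_Ioo_kobaNielsen {a b : ℝ} (ha : -1 < a) (hb : -1 < b) :
    ∫ x in Ioo 0 1, kobaNielsen a b x
      = Real.Gamma (a + 1) * Real.Gamma (b + 1) / Real.Gamma (a + b + 2) := by
  rw [setIntegral_congr_fun measurableSet_Ioo fun _ hx => kobaNielsen_of_mem_Ioo a b hx,
    integral_Ioo_rpow_mul_one_sub_rpow (neg_lt_iff_pos_add.1 ha) (neg_lt_iff_pos_add.1 hb),
    show a + 1 + (b + 1) = a + b + 2 by ring]

theorem integrableOn_Ioi_kobaNielsen {a b : ℝ} (hb : -1 < b) (hab : a + b < -1) :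
    IntegrableOn (kobaNielsen a b) (Ioi 1) := by
  rw [integrableOn_Ioi_one_iff_comp_inv]
  exact (integrableOn_Ioo_rpow_mul_one_sub_rpow (by linarith) (neg_lt_iff_pos_add.1 hb)).congr_fun
    (fun _ ht => (inv_sq_smul_kobaNielsen_inv a b ht).symm) measurableSet_Ioo

theorem integral_Ioi_kobaNielsen {a b : ℝ} (hb : -1 < b) (hab : a + b < -1) :
    ∫ x in Ioi 1, kobaNielsen a b x
      = Real.Gamma (b + 1) * Real.Gamma (-a - b - 1) / Real.Gamma (-a) := by
  rw [integral_Ioi_one_eq_integral_Ioo_comp_inv,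
    setIntegral_congr_fun measurableSet_Ioo fun _ ht => inv_sq_smul_kobaNielsen_inv a b ht,
    integral_Ioo_rpow_mul_one_sub_rpow (by linarith) (neg_lt_iff_pos_add.1 hb), mul_comm,
    show -a - b - 1 + (b + 1) = -a by ring]

theorem integrableOn_Iio_kobaNielsen {a b : ℝ} (ha : -1 < a) (hab : a + b < -1) :
    IntegrableOn (kobaNielsen a b) (Iio 0) := by
  rw [← integrableOn_Ioi_comp_sub_left_iff _ 0 1, sub_zero]
  simpa only [kobaNielsen_one_sub] using integrableOn_Ioi_kobaNielsen ha (by linarith)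

theorem integral_Iio_kobaNielsen {a b : ℝ} (ha : -1 < a) (hab : a + b < -1) :
    ∫ x in Iio 0, kobaNielsen a b x
      = Real.Gamma (a + 1) * Real.Gamma (-a - b - 1) / Real.Gamma (-b) := by
  rw [← integral_comp_sub_left_Ioi _ 0 1, sub_zero]
  simp only [kobaNielsen_one_sub]
  rw [integral_Ioi_kobaNielsen ha (by linarith), show -b - a - 1 = -a - b - 1 by ring]

/-- The crossing-symmetric Veneziano amplitude: the value of the real 4-point
Koba-Nielsen integral in terms of Gamma functions. -/
theorem real_veneziano_four_point (a b : ℝ)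
    (ha : -1 < a) (hb : -1 < b) (hab : a + b < -1) :
    ∫ x : ℝ, |x| ^ a * |1 - x| ^ b
      = Real.Gamma (a + 1) * Real.Gamma (b + 1) / Real.Gamma (a + b + 2)
        + Real.Gamma (a + 1) * Real.Gamma (-a - b - 1) / Real.Gamma (-b)
        + Real.Gamma (b + 1) * Real.Gamma (-a - b - 1) / Real.Gamma (-a) := by
  change ∫ x, kobaNielsen a b x = _
  rw [integral_eq_integral_Iio_add_integral_Ioo_add_integral_Ioi zero_le_one
      (integrableOn_Iio_kobaNielsen ha hab) (integrableOn_Ioo_kobaNielsen ha hb)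
      (integrableOn_Ioi_kobaNielsen hb hab),
    integral_Iio_kobaNielsen ha hab, integral_Ioo_kobaNielsen ha hb,
    integral_Ioi_kobaNielsen hb hab, add_comm (Real.Gamma (a + 1) * _ / _)]
end

section
/- Let s₁₂, s₃₂ ∈ ℂ with 1 + s₁₂ ≠ 0, 1 + s₃₂ ≠ 0 and 1 + s₁₂ + s₃₂ ≠ 0. Then, as real q tends to 1 from the right, the expression (q-2)/q + (1 - q^{-1})·[ q^{-1-s₁₂}/(1 - q^{-1-s₁₂}) + q^{-1-s₃₂}/(1 - q^{-1-s₃₂}) + q^{1+s₁₂+s₃₂}/(1 - q^{1+s₁₂+s₃₂}) ] tends to the Denef–Loeser open string 4-point topological zeta function Z_top^{(4)}(s₁₂,s₃₂) = -1 + 1/(1+s₁₂) + 1/(1+s₃₂) - 1/(1+s₁₂+s₃₂). -/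
open Filter Topology

section Aux
open Complex

lemma aux_slope_lim (z : ℂ) :
    Tendsto (fun q : ℝ => ((q:ℂ) ^ z - 1) / ((q:ℂ) - 1)) (𝓝[>] (1:ℝ)) (𝓝 z) := by
  have hd : HasDerivAt (fun x : ℂ => x ^ z) z 1 := by
    simpa using (hasDerivAt_id (1:ℂ)).cpow_const (by simp)
  have h := hasDerivAt_iff_tendsto_slope.mp hd.comp_ofReal
  have h2 : Tendsto (slope (fun q : ℝ => ((q:ℂ)) ^ z) 1) (𝓝[>] (1:ℝ)) (𝓝 z) :=
    h.mono_left (nhdsWithin_mono 1 (fun x hx => ne_of_gt hx))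
  refine h2.congr fun q => ?_
  simp [slope, Complex.real_smul, div_eq_inv_mul]

lemma aux_cont (z : ℂ) :
    Tendsto (fun q : ℝ => (q:ℂ) ^ z) (𝓝[>] (1:ℝ)) (𝓝 1) := by
  have hd : HasDerivAt (fun x : ℂ => x ^ z) z 1 := by
    simpa using (hasDerivAt_id (1:ℂ)).cpow_const (by simp)
  have h := hd.comp_ofReal.continuousAt.continuousWithinAt (s := Set.Ioi 1)
  simpa [ContinuousWithinAt] using h

lemma aux_term (z : ℂ) (hz : z ≠ 0) :
    Tendsto (fun q : ℝ => (1 - (q:ℂ)⁻¹) * ((q:ℂ) ^ z / (1 - (q:ℂ) ^ z)))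
      (𝓝[>] (1:ℝ)) (𝓝 (-z⁻¹)) := by
  have hratio : Tendsto (fun q : ℝ => (1 - (q:ℂ)⁻¹) / (1 - (q:ℂ) ^ z))
      (𝓝[>] (1:ℝ)) (𝓝 (-z⁻¹)) := by
    have h := (aux_slope_lim (-1)).div (aux_slope_lim z) hz
    have heq : ∀ᶠ q : ℝ in 𝓝[>] (1:ℝ),
        ((q:ℂ) ^ (-1:ℂ) - 1) / ((q:ℂ) - 1) / (((q:ℂ) ^ z - 1) / ((q:ℂ) - 1))
          = (1 - (q:ℂ)⁻¹) / (1 - (q:ℂ) ^ z) := by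
      filter_upwards [self_mem_nhdsWithin] with q hq
      have hq1 : (q:ℂ) - 1 ≠ 0 := by
        rw [sub_ne_zero]
        exact_mod_cast hq.ne'
      rw [div_div_div_cancel_right₀ hq1]
      · rw [cpow_neg, cpow_one]
        rw [show ((q:ℂ)⁻¹ - 1) = -(1 - (q:ℂ)⁻¹) by ring,
            show ((q:ℂ) ^ z - 1) = -(1 - (q:ℂ) ^ z) by ring, neg_div_neg_eq]
    have h2 := (h.congr' heq)
    have : (-1 : ℂ) / z = -z⁻¹ := by ring
    rwa [this] at h2
  simpa using ((aux_cont z).mul hratio).congr fun q => by ring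

end Aux

/-- As `q → 1⁺`, the explicit rational formula for the open string 4-point zeta
function (with `p` replaced by the real parameter `q`) tends to the Denef–Loeser
topological 4-point zeta function. -/
theorem limit_four_point_topological (s₁₂ s₃₂ : ℂ)
    (h₁ : 1 + s₁₂ ≠ 0) (h₂ : 1 + s₃₂ ≠ 0) (h₃ : 1 + s₁₂ + s₃₂ ≠ 0) :
    Tendsto (fun q : ℝ =>
        ((q : ℂ) - 2) / (q : ℂ)
          + (1 - (q : ℂ)⁻¹) *
              ((q : ℂ) ^ (-1 - s₁₂) / (1 - (q : ℂ) ^ (-1 - s₁₂))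
                + (q : ℂ) ^ (-1 - s₃₂) / (1 - (q : ℂ) ^ (-1 - s₃₂))
                + (q : ℂ) ^ (1 + s₁₂ + s₃₂) / (1 - (q : ℂ) ^ (1 + s₁₂ + s₃₂))))
      (nhdsWithin 1 (Set.Ioi 1))
      (nhds (-1 + 1 / (1 + s₁₂) + 1 / (1 + s₃₂) - 1 / (1 + s₁₂ + s₃₂))) := by
  have hcast : Tendsto (fun q : ℝ => (q:ℂ)) (𝓝[>] (1:ℝ)) (𝓝 1) := by
    simpa using (Complex.continuous_ofReal.tendsto 1).mono_left nhdsWithin_le_nhds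
  have hbase : Tendsto (fun q : ℝ => ((q:ℂ) - 2) / (q:ℂ)) (𝓝[>] (1:ℝ)) (𝓝 (-1)) := by
    have hsub : Tendsto (fun q : ℝ => (q:ℂ) - 2) (𝓝[>] (1:ℝ)) (𝓝 (1 - 2)) :=
      hcast.sub (tendsto_const_nhds (x := (2:ℂ)))
    have := hsub.div hcast one_ne_zero
    norm_num at this
    exact this
  have t1 := aux_term (-1 - s₁₂) (by intro h; exact h₁ (by linear_combination -h))
  have t2 := aux_term (-1 - s₃₂) (by intro h; exact h₂ (by linear_combination -h))
  have t3 := aux_term (1 + s₁₂ + s₃₂) h₃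
  have := hbase.add ((t1.add t2).add t3)
  have heq : (-1 : ℂ) + (-(-1 - s₁₂)⁻¹ + -(-1 - s₃₂)⁻¹ + -(1 + s₁₂ + s₃₂)⁻¹)
      = -1 + 1 / (1 + s₁₂) + 1 / (1 + s₃₂) - 1 / (1 + s₁₂ + s₃₂) := by
    rw [show (-1 - s₁₂ : ℂ) = -(1 + s₁₂) by ring, show (-1 - s₃₂ : ℂ) = -(1 + s₃₂) by ring,
      inv_neg, inv_neg]
    simp only [one_div]
    ring
  rw [heq] at this
  exact this.congr fun q => by ring
end

section
/- Let p be a prime number with p ≡ 3 (mod 4), and let τ ∈ ℚ_p be either τ = p, or τ = ε·p where ε ∈ {1,…,p-1} is a quadratic non-residue modulo p. Then there do not exist a, b ∈ ℚ_p with a² - τ·b² = -1; in other words, the p-adic sign function sgn_τ satisfies sgn_τ(-1) = -1. -/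
/-- For `p ≡ 3 mod 4` and `τ = p` or `τ = εp` with `ε` a quadratic non-residue
mod `p`, the number `-1` is not of the form `a² - τb²` in `ℚ_p`; i.e. the
`p`-adic sign function satisfies `sgn_τ(-1) = -1`. -/
theorem padic_sign_neg_one (p : ℕ) [Fact p.Prime] (hp : p % 4 = 3)
    (τ : ℚ_[p])
    (hτ : τ = (p : ℚ_[p]) ∨
      ∃ ε : ℕ, 1 ≤ ε ∧ ε ≤ p - 1 ∧ ¬ IsSquare (ε : ZMod p) ∧
        τ = (ε : ℚ_[p]) * (p : ℚ_[p])) :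
    ¬ ∃ a b : ℚ_[p], a ^ 2 - τ * b ^ 2 = -1 := by
  have hp1 : (1 : ℝ) < p := by exact_mod_cast (Fact.out : p.Prime).one_lt
  -- norm of τ is p⁻¹
  have hτn : ‖τ‖ = (p : ℝ)⁻¹ := by
    rcases hτ with h | ⟨ε, hε1, hε2, hεns, h⟩
    · rw [h, Padic.norm_p]
    · have hnd : ¬ ((p : ℤ) ∣ (ε : ℤ)) := by
        intro hd
        apply hεns
        have : (ε : ZMod p) = 0 := by
          exact_mod_cast (ZMod.intCast_zmod_eq_zero_iff_dvd ε p).2 hd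
        rw [this]; exact ⟨0, by simp⟩
      have hεn : ‖(ε : ℚ_[p])‖ = 1 := by
        have h1 : ‖((ε : ℤ) : ℚ_[p])‖ ≤ 1 := Padic.norm_int_le_one _
        have h2 : ¬ ‖((ε : ℤ) : ℚ_[p])‖ < 1 := by
          rw [Padic.norm_intCast_lt_one_iff]; exact hnd
        push_cast at h1 h2 ⊢
        linarith [lt_or_eq_of_le h1]
      rw [h, norm_mul, hεn, Padic.norm_p, one_mul]
  rintro ⟨a, b, hab⟩
  set t := τ * b ^ 2 with ht
  have hτ0 : τ ≠ 0 := by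
    intro h; rw [h, norm_zero] at hτn
    have : (0 : ℝ) < (p : ℝ)⁻¹ := by positivity
    linarith [hτn ▸ this]
  -- norms of a² and t are distinct
  have hne : ‖a ^ 2‖ ≠ ‖t‖ := by
    intro h
    rcases eq_or_ne a 0 with ha | ha
    · rcases eq_or_ne b 0 with hb | hb
      · rw [ht, ha, hb] at hab; norm_num at hab
      · rw [ht, ha] at h
        have : ‖τ * b ^ 2‖ = 0 := by rw [← h]; simp
        exact (mul_ne_zero hτ0 (pow_ne_zero 2 hb)) (norm_eq_zero.mp this)
    · rcases eq_or_ne b 0 with hb | hb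
      · rw [ht, hb] at h
        simp only [ne_eq, OfNat.ofNat_ne_zero, not_false_eq_true, zero_pow, mul_zero,
          norm_zero] at h
        exact (pow_ne_zero 2 ha) (norm_eq_zero.mp h)
      · have h1 : ‖a ^ 2‖ = (p : ℝ) ^ (-(2 * a.valuation)) := by
          rw [norm_pow, Padic.norm_eq_zpow_neg_valuation ha, ← zpow_natCast ((p:ℝ) ^ (-a.valuation)) 2,
            ← zpow_mul]
          ring_nf
        have h2 : ‖t‖ = (p : ℝ) ^ (-(1 + 2 * b.valuation)) := by
          rw [ht, norm_mul, hτn, norm_pow, Padic.norm_eq_zpow_neg_valuation hb,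
            ← zpow_natCast ((p:ℝ) ^ (-b.valuation)) 2, ← zpow_mul]
          rw [← zpow_neg_one (p : ℝ), ← zpow_add₀ (by linarith : (p:ℝ) ≠ 0)]
          ring_nf
        rw [h1, h2] at h
        have := zpow_right_injective₀ (by linarith) (by linarith : (p:ℝ) ≠ 1) h
        omega
  -- norm of the difference is 1
  have hmax : max ‖a ^ 2‖ ‖t‖ = 1 := by
    have : ‖a ^ 2 - t‖ = max ‖a ^ 2‖ ‖t‖ := by
      rw [sub_eq_add_neg, Padic.add_eq_max_of_ne (by rwa [norm_neg]), norm_neg]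
    rw [← this, hab, norm_neg, norm_one]
  have htne1 : ‖t‖ ≠ 1 := by
    rcases eq_or_ne b 0 with hb | hb
    · rw [ht, hb]; norm_num
    · have h2 : ‖t‖ = (p : ℝ) ^ (-(1 + 2 * b.valuation)) := by
        rw [ht, norm_mul, hτn, norm_pow, Padic.norm_eq_zpow_neg_valuation hb,
          ← zpow_natCast ((p:ℝ) ^ (-b.valuation)) 2, ← zpow_mul]
        rw [← zpow_neg_one (p : ℝ), ← zpow_add₀ (by linarith : (p:ℝ) ≠ 0)]
        ring_nf
      rw [h2]
      intro h
      have := zpow_right_injective₀ (by linarith) (by linarith : (p:ℝ) ≠ 1)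
        (h.trans (zpow_zero (p:ℝ)).symm)
      omega
  have ha2 : ‖a ^ 2‖ = 1 := by
    rcases max_cases ‖a ^ 2‖ ‖t‖ with ⟨h1, _⟩ | ⟨h1, _⟩
    · rw [← hmax, h1]
    · exact absurd (h1 ▸ hmax) htne1
  have htlt : ‖t‖ < 1 := lt_of_le_of_ne (hmax ▸ le_max_right _ _) htne1
  -- move to ℤ_[p]
  set A : ℤ_[p] := ⟨a, by rw [← ha2]; nlinarith [norm_nonneg a, norm_pow a 2 ▸ ha2]⟩ with hA
  set T : ℤ_[p] := ⟨t, le_of_lt htlt⟩ with hT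
  have key : A ^ 2 - T = -1 := by
    apply Subtype.ext
    push_cast [hA, hT]
    exact hab
  have hT0 : PadicInt.toZMod T = 0 := by
    rw [← RingHom.mem_ker, PadicInt.ker_toZMod, IsLocalRing.mem_maximalIdeal, mem_nonunits_iff,
      PadicInt.not_isUnit_iff]
    exact htlt
  have : (PadicInt.toZMod A) ^ 2 = -1 := by
    have := congrArg PadicInt.toZMod key
    rw [map_sub, map_pow, map_neg, map_one, hT0, sub_zero] at this
    exact this
  have hsq : IsSquare (-1 : ZMod p) := ⟨PadicInt.toZMod A, by rw [← this]; ring⟩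
  exact (ZMod.exists_sq_eq_neg_one_iff.mp hsq) hp
end
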